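/- arXiv:1508.03970 — 5 statements merged into one kernel-verified Lean document; each statement's English description precedes it below -/
import Mathlib

section
/- Fix k ≥ 3 and n ≥ k - 1. If n is not representable in the form x_1*...*x_k + x_1 + ... + x_k with 1 ≤ x_1 ≤ ... ≤ x_k, then n - k + 3 is prime. -/
def IsRepr (k n : ℕ) : Prop :=
  ∃ x : Fin k → ℕ, (∀ i, 1 ≤ x i) ∧ Monotone x ∧ n = (∏ i, x i) + ∑ i, x i

theorem stmt_2 (k n : ℕ) (hk : 3 ≤ k) (hn : k - 1 ≤ n)
    (h : ¬ IsRepr k n) : Nat.Prime (n + 3 - k) := by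
  by_contra hp
  apply h
  have hm2 : 2 ≤ n + 3 - k := by omega
  obtain ⟨c, hdvd, hc2, hclt⟩ := Nat.exists_dvd_of_not_prime2 hm2 hp
  obtain ⟨d, hd⟩ := hdvd
  have hd2 : 2 ≤ d := by
    by_contra hd1
    interval_cases d <;> omega
  have hab : min c d * max c d = n + 3 - k := by
    rw [min_mul_max]; omega
  set a := min c d with ha
  set b := max c d with hb
  have ha2 : 2 ≤ a := le_min hc2 hd2
  have hb2 : 2 ≤ b := le_trans hc2 (le_max_left _ _)
  have hab' : a ≤ b := min_le_max
  set A := a - 1 with hA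
  set B := b - 1 with hB
  have hA1 : 1 ≤ A := by omega
  have hB1 : 1 ≤ B := by omega
  have hAB : A ≤ B := by omega
  have key : A * B + A + B + 1 = n + 3 - k := by
    have : a = A + 1 := by omega
    have hbB : b = B + 1 := by omega
    rw [this, hbB] at hab
    rw [← hab]; ring
  set j := k - 2 with hj
  have hkj : k = j + 2 := by omega
  set g : ℕ → ℕ := fun m => if m < j then 1 else if m < j + 1 then A else B with hg
  refine ⟨fun i => g i.val, ?_, ?_, ?_⟩
  · intro i
    simp only [hg]
    split_ifs <;> omega
  · intro i i' hii'
    have : i.val ≤ i'.val := hii'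
    simp only [hg]
    split_ifs <;> omega
  · have hprod : ∏ i : Fin k, g i.val = A * B := by
      rw [Fin.prod_univ_eq_prod_range g k, hkj, Finset.prod_range_succ,
        Finset.prod_range_succ]
      have h1 : ∏ m ∈ Finset.range j, g m = 1 := by
        apply Finset.prod_eq_one
        intro m hm
        simp only [hg]
        rw [if_pos (Finset.mem_range.mp hm)]
      rw [h1]
      simp only [hg]
      rw [if_neg (by omega), if_pos (by omega), if_neg (by omega), if_neg (by omega)]
      ring
    have hsum : ∑ i : Fin k, g i.val = j + A + B := by
      rw [Fin.sum_univ_eq_sum_range g k, hkj, Finset.sum_range_succ,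
        Finset.sum_range_succ]
      have h1 : ∑ m ∈ Finset.range j, g m = j := by
        rw [Finset.sum_congr rfl (fun m hm => by
          simp only [hg]; rw [if_pos (Finset.mem_range.mp hm)])]
        simp
      rw [h1]
      simp only [hg]
      rw [if_neg (by omega), if_pos (by omega), if_neg (by omega), if_neg (by omega)]
    rw [hprod, hsum]
    omega
end

section
/- If 3 ≤ k1 < k2 and n + k1 - 3 is k1-representable, then n + k2 - 3 is k2-representable. -/
lemma isRepr_step (k m : ℕ) (h : IsRepr k m) : IsRepr (k + 1) (m + 1) := by
  obtain ⟨x, hx1, hmono, hm⟩ := h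
  refine ⟨Fin.cons 1 x, ?_, ?_, ?_⟩
  · intro i
    induction i using Fin.cases with
    | zero => simp
    | succ j => simpa using hx1 j
  · intro a b hab
    induction a using Fin.cases with
    | zero =>
      induction b using Fin.cases with
      | zero => simp
      | succ j => simpa using hx1 j
    | succ i =>
      induction b using Fin.cases with
      | zero => exact absurd (le_antisymm hab (Fin.zero_le _)) (Fin.succ_ne_zero i)
      | succ j =>
        simp only [Fin.cons_succ]
        exact hmono (Fin.succ_le_succ_iff.mp hab)
  · rw [Fin.prod_cons, Fin.sum_cons, hm]
    ring

theorem stmt_4 (k₁ k₂ n : ℕ) (hk₁ : 3 ≤ k₁) (hlt : k₁ < k₂)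
    (h : IsRepr k₁ (n + k₁ - 3)) : IsRepr k₂ (n + k₂ - 3) := by
  induction k₂, hlt using Nat.le_induction with
  | base =>
    have e : n + (k₁ + 1) - 3 = (n + k₁ - 3) + 1 := by omega
    rw [e]; exact isRepr_step _ _ h
  | succ k hk ih =>
    have e : n + (k + 1) - 3 = (n + k - 3) + 1 := by omega
    rw [e]; exact isRepr_step _ _ ih
end

section
/- For every integer t ≥ 2 with t not congruent to 1 mod 3, there exist infinitely many primes p of the form p = (2t+1)m + (t+2) with m ≥ 2, and every such prime is 3-representable. -/
def IsRepr3 (n : ℕ) : Prop :=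
  ∃ x₁ x₂ x₃ : ℕ, 1 ≤ x₁ ∧ x₁ ≤ x₂ ∧ x₂ ≤ x₃ ∧
    n = x₁ * x₂ * x₃ + x₁ + x₂ + x₃

/-! The primes in question are `(2t+1)m + (t+2) = 2·t·m + 2 + t + m`, i.e. they are represented
by the triple `(2, t, m)`. Infinitude is Dirichlet's theorem for the
progression `t + 2 mod 2t + 1`, whose terms are coprime to the modulus exactly when `3 ∤ 2t + 1`,
i.e. `t % 3 ≠ 1`. -/

theorem isRepr3_of_le {x y z : ℕ} (hx : 1 ≤ x) (hxy : x ≤ y) (hxz : x ≤ z) :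
    IsRepr3 (x * y * z + x + y + z) := by
  refine ⟨x, min y z, max y z, hx, le_min hxy hxz, min_le_max, ?_⟩
  rcases le_total y z with h | h
  · simp only [min_eq_left h, max_eq_right h]
  · simp only [min_eq_right h, max_eq_left h]; ring

theorem isRepr3_two_mul_add_one_mul_add {t m : ℕ} (ht : 2 ≤ t) (hm : 2 ≤ m) :
    IsRepr3 ((2 * t + 1) * m + (t + 2)) := by
  convert isRepr3_of_le (x := 2) (by norm_num) ht hm using 1
  ring

theorem Nat.infinite_setOf_prime_and_eq_mul_add {q a : ℕ} (hq : q ≠ 0) (ha : a.Coprime q)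
    (k : ℕ) : {p : ℕ | p.Prime ∧ ∃ m, k ≤ m ∧ p = q * m + a}.Infinite := by
  refine Set.infinite_of_forall_exists_gt fun n => ?_
  obtain ⟨p, hpn, hp, hpa⟩ := Nat.forall_exists_prime_gt_and_modEq (max n (q * k + a)) hq ha
  have hap : q * k + a ≤ p := (le_max_right _ _).trans hpn.le
  obtain ⟨m, hm⟩ := (Nat.modEq_iff_dvd' (by omega)).mp hpa.symm
  have hpm : p = q * m + a := by omega
  refine ⟨p, ⟨hp, m, ?_, hpm⟩, (le_max_left _ _).trans_lt hpn⟩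
  exact Nat.le_of_mul_le_mul_left (by omega) (Nat.pos_of_ne_zero hq)

theorem Nat.coprime_add_two_two_mul_add_one {t : ℕ} (ht3 : t % 3 ≠ 1) :
    (t + 2).Coprime (2 * t + 1) := by
  have h3 : (2 * t + 1).Coprime 3 :=
    ((Nat.prime_three.coprime_iff_not_dvd).mpr (by omega)).symm
  have h : (2 * t + 1).Coprime (2 * (t + 2)) := by
    rw [show 2 * (t + 2) = 3 + 1 * (2 * t + 1) by ring, Nat.coprime_add_mul_right_right]
    exact h3
  exact (Nat.Coprime.coprime_mul_left_right h).symm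

theorem stmt_8 (t : ℕ) (ht : 2 ≤ t) (ht3 : t % 3 ≠ 1) :
    {p : ℕ | p.Prime ∧ ∃ m : ℕ, 2 ≤ m ∧ p = (2 * t + 1) * m + (t + 2)}.Infinite ∧
    ∀ p : ℕ, p.Prime → (∃ m : ℕ, 2 ≤ m ∧ p = (2 * t + 1) * m + (t + 2)) →
      IsRepr3 p := by
  refine ⟨Nat.infinite_setOf_prime_and_eq_mul_add (by omega)
    (Nat.coprime_add_two_two_mul_add_one ht3) 2, ?_⟩
  rintro p - ⟨m, hm, rfl⟩
  exact isRepr3_two_mul_add_one_mul_add ht hm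
end

section
/- Suppose p is prime and k ≥ 3 is minimal such that p + k - 3 is k-representable. Then in any k-representation p + k - 3 = x_1*...*x_k + x_1 + ... + x_k with 1 ≤ x_1 ≤ ... ≤ x_k, every x_i satisfies x_i ≥ 2. -/
theorem stmt_11 (p k : ℕ) (hp : p.Prime) (hk : 3 ≤ k)
    (hrep : IsRepr k (p + k - 3))
    (hmin : ∀ k', 3 ≤ k' → k' < k → ¬ IsRepr k' (p + k' - 3))
    (x : Fin k → ℕ) (hx1 : ∀ i, 1 ≤ x i) (hmono : Monotone x)
    (hval : p + k - 3 = (∏ i, x i) + ∑ i, x i) :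
    ∀ i, 2 ≤ x i := by
  obtain ⟨m, rfl⟩ : ∃ m, k = m + 3 := ⟨k - 3, by omega⟩
  -- suffices to show x 0 ≥ 2
  suffices h0 : 2 ≤ x 0 by
    intro i
    exact le_trans h0 (hmono (Fin.zero_le i))
  by_contra h0
  have hx0 : x 0 = 1 := by have := hx1 0; omega
  rcases Nat.eq_zero_or_pos m with rfl | hm
  · -- k = 3 case
    rw [Fin.prod_univ_three, Fin.sum_univ_three] at hval
    have hpe : p = (x 1 + 1) * (x 2 + 1) := by
      rw [hx0] at hval
      have : p + 3 - 3 = p := by omega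
      rw [this] at hval
      rw [hval]; ring
    have hdvd : (x 1 + 1) ∣ p := ⟨x 2 + 1, hpe⟩
    rcases hp.eq_one_or_self_of_dvd _ hdvd with h | h
    · have := hx1 1; omega
    · have h1 := hx1 2
      nlinarith [hp.two_le]
  · -- k > 3 case: drop x 0
    apply hmin (m + 2) (by omega) (by omega)
    refine ⟨fun i => x i.succ, fun i => hx1 _, fun i j hij => hmono (Fin.succ_le_succ_iff.mpr hij), ?_⟩
    show p + (m + 2) - 3 = (∏ i : Fin (m + 2), x i.succ) + ∑ i : Fin (m + 2), x i.succ
    rw [Fin.prod_univ_succ, Fin.sum_univ_succ, hx0, one_mul] at hval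
    omega
end

section
/- Let p be a prime and suppose there exists k ≥ 3 such that p + k - 3 is k-representable. Let s be the smallest such k. Then 2^s + s + 3 ≤ p, and consequently s < log_2(p), i.e., s ≤ floor(log_2 p). -/
lemma two_pow_add_two_mul_le_prod_add_sum {k : ℕ} (x : Fin k → ℕ) (hx : ∀ i, 2 ≤ x i) :
    2 ^ k + 2 * k ≤ (∏ i, x i) + ∑ i, x i := by
  have hprod : 2 ^ k ≤ ∏ i, x i := by
    simpa using Finset.prod_le_prod' (s := Finset.univ) (fun i _ => hx i)
  have hsum : 2 * k ≤ ∑ i, x i := by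
    simpa [mul_comm] using Finset.sum_le_sum (s := Finset.univ) (fun i _ => hx i)
  omega

namespace IsRepr

lemma pred_or_two_pow_le {k n : ℕ} (h : IsRepr (k + 1) n) :
    IsRepr k (n - 1) ∨ 2 ^ (k + 1) + 2 * (k + 1) ≤ n := by
  obtain ⟨x, hx1, hmono, rfl⟩ := h
  by_cases hx0 : x 0 = 1
  · refine Or.inl ⟨fun i => x i.succ, fun i => hx1 _,
      fun i j hij => hmono (Fin.succ_le_succ_iff.mpr hij), ?_⟩
    rw [Fin.prod_univ_succ, Fin.sum_univ_succ, hx0, one_mul]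
    dsimp only
    omega
  · have hx0 : 2 ≤ x 0 := by have := hx1 0; omega
    exact Or.inr <| two_pow_add_two_mul_le_prod_add_sum x
      fun i => hx0.trans (hmono (Fin.zero_le i))

lemma not_prime_succ_of_two {n : ℕ} (h : IsRepr 2 n) : ¬ (n + 1).Prime := by
  obtain ⟨x, hx1, -, rfl⟩ := h
  rw [Fin.prod_univ_two, Fin.sum_univ_two,
    show x 0 * x 1 + (x 0 + x 1) + 1 = (x 0 + 1) * (x 1 + 1) by ring]
  exact Nat.not_prime_mul (by have := hx1 0; omega) (by have := hx1 1; omega)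

end IsRepr

theorem stmt_13 (p s : ℕ) (hp : p.Prime)
    (hs : 3 ≤ s ∧ IsRepr s (p + s - 3))
    (hmin : ∀ k, 3 ≤ k → IsRepr k (p + k - 3) → s ≤ k) :
    2 ^ s + s + 3 ≤ p ∧ (s : ℝ) < Real.logb 2 p ∧ s ≤ Nat.log 2 p := by
  obtain ⟨hs3, hrep⟩ := hs
  obtain ⟨k, rfl⟩ : ∃ k, s = k + 1 := ⟨s - 1, by omega⟩
  have key : 2 ^ (k + 1) + (k + 1) + 3 ≤ p := by
    rcases hrep.pred_or_two_pow_le with hpred | hle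
    · exfalso
      obtain rfl | hk : k = 2 ∨ 3 ≤ k := by omega
      · exact hpred.not_prime_succ_of_two (by convert hp using 1; have := hp.pos; omega)
      · have := hmin k hk (by convert hpred using 1; omega)
        omega
    · omega
  have hpow : 2 ^ (k + 1) < p := by omega
  refine ⟨key, ?_, Nat.le_log_of_pow_le one_lt_two hpow.le⟩
  rw [Real.lt_logb_iff_rpow_lt one_lt_two (by exact_mod_cast hp.pos), Real.rpow_natCast]
  exact_mod_cast hpow
end
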